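/- arXiv:2006.14100 — 6 statements merged into one kernel-verified Lean document; each statement's English description precedes it below -/
import Mathlib

section
/- Let (a_n) be a sequence of real numbers and (c_n) a sequence of nonnegative reals such that a_{n+m} ≤ a_n + a_m + c_n for all n,m ≥ 1, and lim_{n→∞} c_n/n = 0. Then the limit lim_{n→∞} a_n/n exists in [-∞, ∞) (i.e., the sequence a_n/n converges to some a with -∞ ≤ a < ∞). -/
open Filter

private lemma derriennic_key (a c : ℕ → ℝ)
    (hc : ∀ n, 1 ≤ n → 0 ≤ c n)
    (hsub : ∀ n m, 1 ≤ n → 1 ≤ m → a (n + m) ≤ a n + a m + c n)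
    (n : ℕ) (hn : 1 ≤ n) :
    ∃ C : ℝ, ∀ m, 1 ≤ m → a m ≤ C + (m : ℝ) * ((a n + c n) / n) := by
  set s : ℝ := a n + c n with hs
  have hne : (Finset.Icc 1 n).Nonempty := ⟨1, by simp [hn]⟩
  set M : ℝ := (Finset.Icc 1 n).sup' hne a with hM
  refine ⟨M + |s|, ?_⟩
  intro m
  induction m using Nat.strong_induction_on with
  | _ m ih =>
    intro hm
    have hnpos : (0:ℝ) < n := by exact_mod_cast hn
    rcases le_or_gt m n with hmn | hmn
    · have h1 : a m ≤ M := Finset.le_sup' a (by simp [hm, hmn])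
      have h2 : -|s| ≤ (m : ℝ) * (s / n) := by
        have hm' : (m:ℝ) ≤ n := by exact_mod_cast hmn
        have hm0 : (0:ℝ) ≤ m := by positivity
        rcases le_or_gt 0 s with h | h
        · have h2 : (0:ℝ) ≤ (m:ℝ) * (s / n) := by positivity
          have := abs_nonneg s
          linarith
        · rw [abs_of_neg h, neg_neg, mul_div_assoc', le_div_iff₀ hnpos]
          nlinarith [mul_le_mul_of_nonpos_right hm' h.le]
      linarith
    · have hmn1 : 1 ≤ m - n := by omega
      have hmlt : m - n < m := by omega
      have ihm := ih (m - n) hmlt hmn1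
      have hadd := hsub n (m - n) hn hmn1
      rw [show n + (m - n) = m by omega] at hadd
      have hcast : ((m - n : ℕ) : ℝ) = (m : ℝ) - n := by
        have : n ≤ m := hmn.le
        push_cast [Nat.cast_sub this]; ring
      rw [hcast] at ihm
      have hns : (n : ℝ) * (s / n) = s := by field_simp
      nlinarith [ihm, hadd]

private lemma derriennic_limsup_le (a c : ℕ → ℝ)
    (hc : ∀ n, 1 ≤ n → 0 ≤ c n)
    (hsub : ∀ n m, 1 ≤ n → 1 ≤ m → a (n + m) ≤ a n + a m + c n)
    (n : ℕ) (hn : 1 ≤ n) (d : ℝ) (hd : (a n + c n) / n < d) :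
    atTop.limsup (fun m : ℕ => ((a m / m : ℝ) : EReal)) ≤ (d : EReal) := by
  obtain ⟨C, hC⟩ := derriennic_key a c hc hsub n hn
  set s : ℝ := a n + c n with hs
  refine limsup_le_of_le (by isBoundedDefault) ?_
  have h0 : Tendsto (fun m : ℕ => C / m) atTop (nhds 0) :=
    tendsto_const_div_atTop_nhds_zero_nat C
  have hev : ∀ᶠ m : ℕ in atTop, C / m < d - s / n :=
    h0.eventually_lt_const (by linarith)
  filter_upwards [hev, eventually_ge_atTop 1] with m h1 h2
  have hmpos : (0:ℝ) < m := by exact_mod_cast h2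
  have hCm : C < (d - s / n) * m := (div_lt_iff₀ hmpos).mp h1
  have := hC m h2
  have : a m ≤ d * m := by nlinarith
  have : a m / m ≤ d := by rw [div_le_iff₀ hmpos]; exact this
  exact_mod_cast EReal.coe_le_coe_iff.mpr this

/-- Derriennic's generalization of Fekete's subadditive lemma. -/
theorem derriennic_fekete (a c : ℕ → ℝ)
    (hc : ∀ n, 1 ≤ n → 0 ≤ c n)
    (hsub : ∀ n m, 1 ≤ n → 1 ≤ m → a (n + m) ≤ a n + a m + c n)
    (hc0 : Tendsto (fun n : ℕ => c n / n) atTop (nhds 0)) :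
    ∃ A : EReal, A < ⊤ ∧
      Tendsto (fun n : ℕ => ((a n / n : ℝ) : EReal)) atTop (nhds A) := by
  set f : ℕ → EReal := fun m => ((a m / m : ℝ) : EReal) with hf
  have hls : atTop.limsup f ≤ atTop.liminf f := by
    rw [← EReal.le_of_forall_lt_iff_le]
    intro B hB
    rw [← EReal.le_of_forall_lt_iff_le]
    intro d hd
    have hBd : B < d := by exact_mod_cast hd
    have hfreq : ∃ᶠ m in atTop, f m < (B : EReal) :=
      frequently_lt_of_liminf_lt (by isBoundedDefault) hB
    have hev : ∀ᶠ n : ℕ in atTop, c n / n < d - B ∧ 1 ≤ n := by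
      filter_upwards [hc0.eventually_lt_const (by linarith : (0:ℝ) < d - B),
        eventually_ge_atTop 1] with n h1 h2
      exact ⟨h1, h2⟩
    obtain ⟨n, hfn, hcn, hn1⟩ := (hfreq.and_eventually hev).exists
    have hfn' : ((a n / n : ℝ) : EReal) < (B : EReal) := hfn
    have han : a n / n < B := by exact_mod_cast hfn'
    apply derriennic_limsup_le a c hc hsub n hn1
    rw [add_div]
    linarith
  have hlt : atTop.limsup f ≤ ((a 1 + c 1 + 1 : ℝ) : EReal) :=
    derriennic_limsup_le a c hc hsub 1 le_rfl _ (by norm_num)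
  refine ⟨atTop.liminf f, ?_, ?_⟩
  · exact ((liminf_le_limsup).trans hlt).trans_lt (EReal.coe_lt_top _)
  · exact tendsto_of_liminf_eq_limsup rfl (le_antisymm hls (liminf_le_limsup))
end

section
/- Let M be a set, f : M → M, and φ : M → ℝ bounded. Fix x ∈ M that is not eventually periodic, and suppose for every ε > 0 there exist j_ε, k_ε ∈ ℕ such that f^j(x) ∈ E_{k_ε}^ε for all j ≥ j_ε, where E_k^ε = {w : ∑_{i=0}^{m-1} φ(f^i(w)) ≤ m(φ_-(w)+ε) for some m ∈ {1,...,k}} and φ_-(w) = liminf_n (1/n)∑_{i=0}^{n-1} φ(f^i(w)). Then the limit lim_{n→∞} (1/n) ∑_{j=0}^{n-1} φ(f^j(x)) exists. -/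
open Filter

/-- Birkhoff sums. -/
noncomputable def birkSum {M : Type*} (f : M → M) (φ : M → ℝ) (n : ℕ) (x : M) : ℝ :=
  ∑ j ∈ Finset.range n, φ (f^[j] x)

/-- Lower Birkhoff average. -/
noncomputable def birkLower {M : Type*} (f : M → M) (φ : M → ℝ) (x : M) : ℝ :=
  liminf (fun n : ℕ => birkSum f φ n x / n) atTop

/-- `E_k^ε` for Birkhoff sums. -/
def ESetB {M : Type*} (f : M → M) (φ : M → ℝ) (ε : ℝ) (k : ℕ) : Set M :=
  {x | ∃ m, 1 ≤ m ∧ m ≤ k ∧ birkSum f φ m x ≤ m * (birkLower f φ x + ε)}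

/-!
The lower Birkhoff average `L` is constant along orbits. Absorption into `E_k^ε` means that
from time `j_ε` on, every time `j` can be followed by a block of at most `k_ε` steps whose
Birkhoff sum is at most `L + ε` per step. Chaining such blocks greedily leaves an uncovered tail
of fewer than `k_ε` steps, so `S_n(x) ≤ n (L + ε) + D_ε`. Hence `limsup S_n(x)/n ≤ L + ε` for
every `ε > 0`, and the averages converge to `L`.
-/

open Topology

lemma liminf_add_of_tendsto_zero {ι : Type*} {l : Filter ι} [NeBot l] {u v : ι → ℝ}
    (hu : Tendsto u l (𝓝 0)) (hv_le : IsBoundedUnder (· ≤ ·) l v)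
    (hv_ge : IsBoundedUnder (· ≥ ·) l v) :
    liminf (u + v) l = liminf v l := by
  apply le_antisymm
  · simpa [hu.limsup_eq] using liminf_add_le hu.isBoundedUnder_ge hu.isBoundedUnder_le hv_ge
      hv_le.isCoboundedUnder_ge
  · simpa [hu.liminf_eq] using le_liminf_add hu.isBoundedUnder_ge hu.isBoundedUnder_le hv_ge
      hv_le.isCoboundedUnder_ge

lemma tendsto_liminf_of_forall_limsup_le_liminf_add {ι : Type*} {l : Filter ι} [NeBot l]
    {u : ι → ℝ} (hu_le : IsBoundedUnder (· ≤ ·) l u) (hu_ge : IsBoundedUnder (· ≥ ·) l u)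
    (h : ∀ ε : ℝ, 0 < ε → limsup u l ≤ liminf u l + ε) :
    Tendsto u l (𝓝 (liminf u l)) :=
  tendsto_of_liminf_eq_limsup rfl
    (le_antisymm (le_of_forall_pos_le_add h) (liminf_le_limsup hu_le hu_ge)) hu_le hu_ge

lemma limsup_div_le_of_eventually_le {s : ℕ → ℝ} {c D : ℝ}
    (hs : IsCoboundedUnder (· ≤ ·) atTop (fun n : ℕ => s n / n))
    (h : ∀ᶠ n : ℕ in atTop, s n ≤ n * c + D) :
    limsup (fun n : ℕ => s n / n) atTop ≤ c := by
  have hlim : Tendsto (fun n : ℕ => c + D / n) atTop (𝓝 c) := by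
    simpa using tendsto_const_nhds.add (tendsto_const_div_atTop_nhds_zero_nat D)
  have hev : ∀ᶠ n : ℕ in atTop, s n / n ≤ c + D / n := by
    filter_upwards [h, eventually_gt_atTop 0] with n hn hpos
    have hpos : (0 : ℝ) < n := by exact_mod_cast hpos
    rw [div_le_iff₀ hpos, add_mul, div_mul_cancel₀ _ hpos.ne']
    linarith
  exact (limsup_le_limsup hev hs hlim.isBoundedUnder_le).trans_eq hlim.limsup_eq

lemma exists_le_of_forall_exists_le_within {α : Type*} [Preorder α] {g : ℕ → α} {j₀ k : ℕ}
    (h : ∀ j, j₀ ≤ j → ∃ m, 1 ≤ m ∧ m ≤ k ∧ g (j + m) ≤ g j) (n : ℕ) (hn : j₀ ≤ n) :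
    ∃ t, j₀ ≤ t ∧ t ≤ n ∧ n < t + k ∧ g t ≤ g j₀ := by
  induction n, hn using Nat.le_induction with
  | base =>
    obtain ⟨m, hm1, hmk, -⟩ := h j₀ le_rfl
    exact ⟨j₀, le_rfl, le_rfl, by omega, le_rfl⟩
  | succ n _ ih =>
    obtain ⟨t, hjt, htn, hnt, hgt⟩ := ih
    by_cases hlt : n + 1 < t + k
    · exact ⟨t, hjt, by omega, hlt, hgt⟩
    · obtain ⟨m, hm1, hmk, hgm⟩ := h t hjt
      exact ⟨t + m, by omega, by omega, by omega, hgm.trans hgt⟩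

namespace Birkhoff

variable {M : Type*} {f : M → M} {φ : M → ℝ} {C : ℝ}

lemma birkSum_add (n m : ℕ) (x : M) :
    birkSum f φ (n + m) x = birkSum f φ n x + birkSum f φ m (f^[n] x) := by
  rw [birkSum, birkSum, birkSum, Finset.sum_range_add]
  congr 1
  exact Finset.sum_congr rfl fun j _ => by rw [add_comm, Function.iterate_add_apply]

lemma birkSum_succ (n : ℕ) (x : M) :
    birkSum f φ (n + 1) x = φ x + birkSum f φ n (f x) := by
  rw [add_comm, birkSum_add]
  simp [birkSum]

variable (f)

lemma abs_birkSum_le (hbdd : ∀ x, |φ x| ≤ C) (n : ℕ) (x : M) :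
    |birkSum f φ n x| ≤ n * C :=
  calc |birkSum f φ n x| ≤ ∑ j ∈ Finset.range n, |φ (f^[j] x)| :=
        Finset.abs_sum_le_sum_abs _ _
    _ ≤ ∑ _j ∈ Finset.range n, C := Finset.sum_le_sum fun j _ => hbdd _
    _ = n * C := by simp

lemma abs_birkSum_div_le (hbdd : ∀ x, |φ x| ≤ C) (n : ℕ) (x : M) :
    |birkSum f φ n x / n| ≤ C := by
  rcases n.eq_zero_or_pos with rfl | hn
  · simpa using (abs_nonneg _).trans (hbdd x)
  · have hn : (0 : ℝ) < n := by exact_mod_cast hn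
    rw [abs_div, Nat.abs_cast, div_le_iff₀ hn, mul_comm]
    exact abs_birkSum_le f hbdd n x

lemma isBoundedUnder_le_birkSum_div (hbdd : ∀ x, |φ x| ≤ C) (x : M) :
    IsBoundedUnder (· ≤ ·) atTop (fun n : ℕ => birkSum f φ n x / n) :=
  isBoundedUnder_of ⟨C, fun n => (abs_le.1 (abs_birkSum_div_le f hbdd n x)).2⟩

lemma isBoundedUnder_ge_birkSum_div (hbdd : ∀ x, |φ x| ≤ C) (x : M) :
    IsBoundedUnder (· ≥ ·) atTop (fun n : ℕ => birkSum f φ n x / n) :=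
  isBoundedUnder_of ⟨-C, fun n => (abs_le.1 (abs_birkSum_div_le f hbdd n x)).1⟩

lemma birkLower_apply (hbdd : ∀ x, |φ x| ≤ C) (x : M) :
    birkLower f φ (f x) = birkLower f φ x := by
  set a : ℕ → ℝ := fun n => birkSum f φ n x / n
  have hshift : ∀ᶠ n : ℕ in atTop,
      birkSum f φ n (f x) / n = (a (n + 1) - φ x) / n + a (n + 1) := by
    filter_upwards [eventually_ne_atTop 0] with n hn
    simp only [a, birkSum_succ]
    push_cast
    field_simp
    ring
  have hsmall : Tendsto (fun n : ℕ => (a (n + 1) - φ x) / n) atTop (𝓝 0) := by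
    refine squeeze_zero_norm (fun n => ?_) (tendsto_const_div_atTop_nhds_zero_nat (2 * C))
    rw [norm_div, Real.norm_natCast]
    gcongr
    calc ‖a (n + 1) - φ x‖ ≤ |a (n + 1)| + |φ x| := abs_sub _ _
      _ ≤ 2 * C := by linarith [abs_birkSum_div_le f hbdd (n + 1) x, hbdd x]
  calc birkLower f φ (f x)
      = liminf ((fun n : ℕ => (a (n + 1) - φ x) / n) + fun n => a (n + 1)) atTop :=
        liminf_congr hshift
    _ = liminf (fun n => a (n + 1)) atTop :=
        liminf_add_of_tendsto_zero hsmall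
          ((tendsto_add_atTop_nat 1).isBoundedUnder_comp (isBoundedUnder_le_birkSum_div f hbdd x))
          ((tendsto_add_atTop_nat 1).isBoundedUnder_comp (isBoundedUnder_ge_birkSum_div f hbdd x))
    _ = birkLower f φ x := liminf_nat_add a 1

lemma birkLower_iterate (hbdd : ∀ x, |φ x| ≤ C) (x : M) (j : ℕ) :
    birkLower f φ (f^[j] x) = birkLower f φ x := by
  induction j with
  | zero => rfl
  | succ j ih => rw [Function.iterate_succ_apply', birkLower_apply f hbdd, ih]

lemma exists_birkSum_le_of_forall_mem_ESetB (hbdd : ∀ x, |φ x| ≤ C) {x : M} {ε : ℝ}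
    {j₀ k : ℕ} (habs : ∀ j, j₀ ≤ j → f^[j] x ∈ ESetB f φ ε k) :
    ∃ D, ∀ n, j₀ ≤ n → birkSum f φ n x ≤ n * (birkLower f φ x + ε) + D := by
  set c := birkLower f φ x + ε
  set g : ℕ → ℝ := fun n => birkSum f φ n x - n * c with hg
  have hg_add (n m : ℕ) : g (n + m) = g n + (birkSum f φ m (f^[n] x) - m * c) := by
    simp only [hg, birkSum_add]
    push_cast
    ring
  have hdescent : ∀ j, j₀ ≤ j → ∃ m, 1 ≤ m ∧ m ≤ k ∧ g (j + m) ≤ g j := by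
    intro j hj
    obtain ⟨m, hm1, hmk, hm⟩ := habs j hj
    rw [birkLower_iterate f hbdd] at hm
    exact ⟨m, hm1, hmk, by rw [hg_add]; linarith⟩
  have hC : 0 ≤ C := (abs_nonneg _).trans (hbdd x)
  refine ⟨g j₀ + k * (C + |c|), fun n hn => ?_⟩
  obtain ⟨t, -, htn, hnt, hgt⟩ := exists_le_of_forall_exists_le_within hdescent n hn
  obtain ⟨r, rfl⟩ := Nat.exists_eq_add_of_le htn
  have hr : (r : ℝ) ≤ k := by exact_mod_cast (by omega : r ≤ k)
  have htail : birkSum f φ r (f^[t] x) - r * c ≤ k * (C + |c|) :=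
    calc birkSum f φ r (f^[t] x) - r * c ≤ r * C + r * |c| := by
          have := (abs_le.1 (abs_birkSum_le f hbdd r (f^[t] x))).2
          nlinarith [neg_abs_le c, (Nat.cast_nonneg r : (0 : ℝ) ≤ r)]
      _ ≤ k * (C + |c|) := by rw [← mul_add]; gcongr
  have := hg_add t r
  simp only [hg] at this hgt ⊢
  linarith

end Birkhoff

open Birkhoff in
theorem birkhoff_limit_of_absorption_general {M : Type*} (f : M → M) (φ : M → ℝ)
    (C : ℝ) (hbdd : ∀ x, |φ x| ≤ C) (x : M)
    (habs : ∀ ε : ℝ, 0 < ε → ∃ jε kε : ℕ, ∀ j : ℕ, jε ≤ j →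
      f^[j] x ∈ ESetB f φ ε kε) :
    ∃ L : ℝ, Tendsto (fun n : ℕ => birkSum f φ n x / n) atTop (nhds L) := by
  have hge := isBoundedUnder_ge_birkSum_div f hbdd x
  refine ⟨_, tendsto_liminf_of_forall_limsup_le_liminf_add
    (isBoundedUnder_le_birkSum_div f hbdd x) hge fun ε hε => ?_⟩
  obtain ⟨j₀, k, hj⟩ := habs ε hε
  obtain ⟨D, hD⟩ := exists_birkSum_le_of_forall_mem_ESetB f hbdd hj
  exact limsup_div_le_of_eventually_le hge.isCoboundedUnder_le
    (eventually_atTop.2 ⟨j₀, hD⟩)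

/-- The Birkhoff limit exists at a non-eventually-periodic point whose orbit is
eventually absorbed into the sets `E_k^ε`. -/
theorem birkhoff_limit_of_absorption {M : Type*} (f : M → M) (φ : M → ℝ)
    (C : ℝ) (hbdd : ∀ x, |φ x| ≤ C) (x : M)
    (hnp : ¬ ∃ j m : ℕ, 1 ≤ m ∧ f^[m] (f^[j] x) = f^[j] x)
    (habs : ∀ ε : ℝ, 0 < ε → ∃ jε kε : ℕ, ∀ j : ℕ, jε ≤ j →
      f^[j] x ∈ ESetB f φ ε kε) :
    ∃ L : ℝ, Tendsto (fun n : ℕ => birkSum f φ n x / n) atTop (nhds L) :=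
  birkhoff_limit_of_absorption_general f φ C hbdd x habs
end

section
/- Let M be a compact metric space, f : M → M continuous, and φ : M → ℝ bounded measurable. Fix x ∈ M and suppose for every ε > 0 there exists k_ε ∈ ℕ such that the ω-limit set ω(x, f) is contained in the interior of E_{k_ε}^ε, where E_k^ε = {w : ∑_{i=0}^{m-1} φ(f^i(w)) ≤ m(φ_-(w)+ε) for some m ∈ {1,...,k}} and φ_-(w) = liminf_n (1/n)∑_{i=0}^{n-1} φ(f^i(w)). Then lim_{n→∞} (1/n) ∑_{j=0}^{n-1} φ(f^j(x)) exists. -/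
/-!
On the open set `interior E_k^ε` every point `w` starts a block of length `m ≤ k` whose
Birkhoff average is at most `φ_-(w) + ε`. Since `ω(x, f)` lies in this open set and `M` is
compact, the orbit of `x` eventually stays in it, and `φ_-` is constant along orbits. Cutting
the orbit into such consecutive blocks (with a remainder of length at most `k`) gives
`limsup (1/n) S_n φ(x) ≤ φ_-(x) + ε`, so the Birkhoff averages converge to `φ_-(x)`.
-/

open Filter

/-- ω-limit set of a point under a map. -/
def omegaMap {M : Type*} [TopologicalSpace M] (f : M → M) (x : M) : Set M :=
  {y | ∃ s : ℕ → ℕ, StrictMono s ∧ Tendsto (fun k => f^[s k] x) atTop (nhds y)}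

open Topology

theorem eventually_iterate_mem_of_omegaMap_subset {M : Type*} [TopologicalSpace M]
    [CompactSpace M] [FirstCountableTopology M] {f : M → M} {x : M} {U : Set M}
    (hU : IsOpen U) (hω : omegaMap f x ⊆ U) : ∀ᶠ n in atTop, f^[n] x ∈ U := by
  by_contra hfreq
  obtain ⟨y, hyU, s, hs, hlim⟩ :=
    hU.isClosed_compl.isCompact.tendsto_subseq' (not_eventually.1 hfreq)
  exact hyU (hω ⟨s, hs, hlim⟩)

theorem liminf_add_of_right_tendsto_zero {ι α : Type*} [AddCommGroup α]
    [ConditionallyCompleteLinearOrder α] [DenselyOrdered α] [AddLeftMono α]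
    [TopologicalSpace α] [OrderTopology α] {l : Filter ι} [l.NeBot] {u v : ι → α}
    (hv : Tendsto v l (𝓝 0)) (hu_le : IsBoundedUnder (· ≤ ·) l u)
    (hu_ge : IsBoundedUnder (· ≥ ·) l u) :
    liminf (u + v) l = liminf u l := by
  have hvl : liminf v l = 0 := hv.liminf_eq
  have hvs : limsup v l = 0 := hv.limsup_eq
  apply le_antisymm
  · rw [add_comm u v]
    simpa [hvs] using liminf_add_le hv.isBoundedUnder_ge hv.isBoundedUnder_le hu_ge
      hu_le.isCoboundedUnder_ge
  · simpa [hvl] using le_liminf_add hu_ge hu_le hv.isBoundedUnder_ge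
      hv.isBoundedUnder_le.isCoboundedUnder_ge

section Birkhoff

variable {M : Type*} {f : M → M} {φ : M → ℝ} {C : ℝ}

theorem birkSum_succ (n : ℕ) (x : M) :
    birkSum f φ (n + 1) x = birkSum f φ n x + φ (f^[n] x) :=
  Finset.sum_range_succ _ n

theorem birkSum_add (m n : ℕ) (x : M) :
    birkSum f φ (m + n) x = birkSum f φ m x + birkSum f φ n (f^[m] x) := by
  simp only [birkSum, Finset.sum_range_add, ← Function.iterate_add_apply, add_comm]

theorem birkSum_apply (n : ℕ) (x : M) :
    birkSum f φ n (f x) = birkSum f φ n x + φ (f^[n] x) - φ x := by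
  have h := birkSum_add (f := f) (φ := φ) 1 n x
  rw [add_comm, birkSum_succ] at h
  simp only [birkSum, Finset.range_one, Finset.sum_singleton, Function.iterate_zero_apply,
    Function.iterate_one] at h ⊢
  linarith

theorem abs_birkSum_le (hφ : ∀ y, |φ y| ≤ C) (n : ℕ) (x : M) :
    |birkSum f φ n x| ≤ n * C := by
  calc |birkSum f φ n x| ≤ ∑ j ∈ Finset.range n, |φ (f^[j] x)| :=
        Finset.abs_sum_le_sum_abs _ _
    _ ≤ ∑ _j ∈ Finset.range n, C := Finset.sum_le_sum fun j _ => hφ _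
    _ = n * C := by simp

theorem abs_birkSum_div_le (hφ : ∀ y, |φ y| ≤ C) (n : ℕ) (x : M) :
    |birkSum f φ n x / n| ≤ C := by
  rcases Nat.eq_zero_or_pos n with rfl | hn
  · simpa using (abs_nonneg _).trans (hφ x)
  · rw [abs_div, Nat.abs_cast, div_le_iff₀ (by exact_mod_cast hn), mul_comm]
    exact abs_birkSum_le hφ n x

theorem birkLower_apply (hφ : ∀ y, |φ y| ≤ C) (x : M) :
    birkLower f φ (f x) = birkLower f φ x := by
  have havg : (fun n : ℕ => birkSum f φ n (f x) / n) =
      (fun n : ℕ => birkSum f φ n x / n) + fun n : ℕ => (n : ℝ)⁻¹ * (φ (f^[n] x) - φ x) := by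
    ext n
    simp only [Pi.add_apply, birkSum_apply]
    ring
  have hbound : ∀ n, |birkSum f φ n x / n| ≤ C := fun n => abs_birkSum_div_le hφ n x
  have hcorr : Tendsto (fun n : ℕ => (n : ℝ)⁻¹ * (φ (f^[n] x) - φ x)) atTop (𝓝 0) :=
    tendsto_inv_atTop_nhds_zero_nat.zero_mul_isBoundedUnder_le
      (isBoundedUnder_of ⟨C + C, fun n => (abs_sub _ _).trans (add_le_add (hφ _) (hφ _))⟩)
  rw [birkLower, birkLower, havg]
  exact liminf_add_of_right_tendsto_zero hcorr
    (isBoundedUnder_of ⟨C, fun n => le_of_abs_le (hbound n)⟩)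
    (isBoundedUnder_of ⟨-C, fun n => neg_le_of_abs_le (hbound n)⟩)

theorem birkLower_iterate (hφ : ∀ y, |φ y| ≤ C) (x : M) (p : ℕ) :
    birkLower f φ (f^[p] x) = birkLower f φ x := by
  induction p with
  | zero => rfl
  | succ p ih => rw [Function.iterate_succ_apply', birkLower_apply hφ, ih]

end Birkhoff

section Blocks

variable {S : ℕ → ℝ} {C b : ℝ} {k N : ℕ}

theorem le_add_mul_of_forall_succ_le (hinc : ∀ n, S (n + 1) ≤ S n + C) (p n : ℕ) :
    S (p + n) ≤ S p + n * C := by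
  induction n with
  | zero => simp
  | succ n ih =>
    rw [← add_assoc]
    push_cast
    linarith [hinc (p + n)]

theorem le_add_mul_add_of_blocks (hinc : ∀ n, S (n + 1) ≤ S n + C)
    (hblock : ∀ p ≥ N, ∃ m, 1 ≤ m ∧ m ≤ k ∧ S (p + m) ≤ S p + m * b)
    (n : ℕ) {p : ℕ} (hp : N ≤ p) : S (p + n) ≤ S p + n * b + k * |C - b| := by
  induction n using Nat.strong_induction_on generalizing p with
  | _ n ih =>
    by_cases hnk : n ≤ k
    · have hn : (n : ℝ) ≤ k := by exact_mod_cast hnk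
      calc S (p + n) ≤ S p + n * C := le_add_mul_of_forall_succ_le hinc p n
        _ = S p + n * b + n * (C - b) := by ring
        _ ≤ S p + n * b + k * |C - b| := by
          have := (mul_le_mul_of_nonneg_left (le_abs_self (C - b)) n.cast_nonneg).trans
            (mul_le_mul_of_nonneg_right hn (abs_nonneg _))
          linarith
    · obtain ⟨m, hm1, hmk, hm⟩ := hblock p hp
      have hrest := ih (n - m) (by omega) (p := p + m) (by omega)
      rw [add_assoc, Nat.add_sub_cancel' (by omega), Nat.cast_sub (by omega)] at hrest
      linarith

theorem eventually_div_lt_of_blocks (hinc : ∀ n, S (n + 1) ≤ S n + C)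
    (hblock : ∀ p ≥ N, ∃ m, 1 ≤ m ∧ m ≤ k ∧ S (p + m) ≤ S p + m * b) {c : ℝ} (hbc : b < c) :
    ∀ᶠ n : ℕ in atTop, S n / n < c := by
  set D := S N - N * b + k * |C - b|
  have hlin : ∀ n ≥ N, S n ≤ n * b + D := by
    intro n hn
    obtain ⟨j, rfl⟩ := Nat.exists_eq_add_of_le hn
    have := le_add_mul_add_of_blocks hinc hblock j le_rfl
    push_cast
    linarith
  have hlim : Tendsto (fun n : ℕ => b + D / n) atTop (𝓝 b) := by
    simpa using tendsto_const_nhds.add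
      ((tendsto_const_nhds (x := D)).div_atTop tendsto_natCast_atTop_atTop)
  filter_upwards [hlim.eventually_lt_const hbc, eventually_ge_atTop (max N 1)] with n hlt hn
  have hpos : (0 : ℝ) < n := by exact_mod_cast (le_max_right N 1).trans hn
  calc S n / n ≤ (n * b + D) / n := by gcongr; exact hlin n ((le_max_left N 1).trans hn)
    _ = b + D / n := by field_simp
    _ < c := hlt

end Blocks

theorem exists_block_of_iterate_mem_ESetB {M : Type*} {f : M → M} {φ : M → ℝ} {C ε : ℝ}
    {k p : ℕ} {x : M} (hφ : ∀ y, |φ y| ≤ C) (hp : f^[p] x ∈ ESetB f φ ε k) :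
    ∃ m, 1 ≤ m ∧ m ≤ k ∧
      birkSum f φ (p + m) x ≤ birkSum f φ p x + m * (birkLower f φ x + ε) := by
  obtain ⟨m, hm1, hmk, hm⟩ := hp
  rw [birkLower_iterate hφ] at hm
  exact ⟨m, hm1, hmk, by rw [birkSum_add]; linarith⟩

theorem birkhoff_limit_of_omega_interior_general {M : Type*} [MetricSpace M] [CompactSpace M]
    (f : M → M)
    (φ : M → ℝ) (C : ℝ) (hbdd : ∀ x, |φ x| ≤ C) (x : M)
    (h : ∀ ε : ℝ, 0 < ε → ∃ kε : ℕ,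
      omegaMap f x ⊆ interior (ESetB f φ ε kε)) :
    ∃ L : ℝ, Tendsto (fun n : ℕ => birkSum f φ n x / n) atTop (nhds L) := by
  refine ⟨birkLower f φ x, tendsto_order.2 ⟨fun c hc => ?_, fun c hc => ?_⟩⟩
  · exact eventually_lt_of_lt_liminf hc
      (isBoundedUnder_of ⟨-C, fun n => neg_le_of_abs_le (abs_birkSum_div_le hbdd n x)⟩)
  · obtain ⟨k, hk⟩ := h ((c - birkLower f φ x) / 2) (by linarith)
    obtain ⟨N, hN⟩ := eventually_atTop.1
      (eventually_iterate_mem_of_omegaMap_subset isOpen_interior hk)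
    have hinc (n : ℕ) : birkSum f φ (n + 1) x ≤ birkSum f φ n x + C := by
      rw [birkSum_succ]
      linarith [le_of_abs_le (hbdd (f^[n] x))]
    exact eventually_div_lt_of_blocks hinc
      (fun p hp => exists_block_of_iterate_mem_ESetB hbdd (interior_subset (hN p hp)))
      (by linarith)

/-- If the ω-limit set of `x` lies in the interior of some `E_{k_ε}^ε` for every `ε`,
then the Birkhoff limit exists at `x`. -/
theorem birkhoff_limit_of_omega_interior {M : Type*} [MetricSpace M] [CompactSpace M]
    [MeasurableSpace M] [BorelSpace M]
    (f : M → M) (hf : Continuous f)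
    (φ : M → ℝ) (hφ : Measurable φ) (C : ℝ) (hbdd : ∀ x, |φ x| ≤ C) (x : M)
    (h : ∀ ε : ℝ, 0 < ε → ∃ kε : ℕ,
      omegaMap f x ⊆ interior (ESetB f φ ε kε)) :
    ∃ L : ℝ, Tendsto (fun n : ℕ => birkSum f φ n x / n) atTop (nhds L) :=
  birkhoff_limit_of_omega_interior_general f φ C hbdd x h
end

section
/- Let M be a compact metric space, f : M → M continuous, φ : M → ℝ continuous, and suppose φ_-(x) = liminf_n (1/n)∑_{j=0}^{n-1} φ(f^j(x)) defines a continuous function on M. If x ∈ M is such that ω(x, f) is a finite set, then lim_{n→∞} (1/n) ∑_{j=0}^{n-1} φ(f^j(x)) exists. -/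
open Filter

/-!
The points of the finite set `ω(x)` are `γ`-separated. Once the orbit of `x` stays `δ`-close to
`ω(x)` with `δ` small against `γ` and against the modulus of continuity of `f`, the point of
`ω(x)` near `f^[n] x` is unique and is carried along by `f`; hence the orbit of `x` is asymptotic
to the orbit of a point of `ω(x)`, which is eventually periodic since `ω(x)` is finite and
invariant. By uniform continuity, `φ` along the orbit of `x` is then, after a shift, `φ` along a
periodic orbit plus a null sequence, and Cesàro averages of both converge.
-/

open Finset Function Topology Uniformity

theorem Function.Periodic.sum_range_add_period {A : Type*} [AddCommMonoid A] {g : ℕ → A}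
    {p : ℕ} (hg : Periodic g p) (n : ℕ) :
    ∑ j ∈ range (n + p), g j = ∑ j ∈ range n, g j + ∑ j ∈ range p, g j := by
  induction n with
  | zero => simp
  | succ n ih =>
    rw [Nat.add_right_comm, sum_range_succ, ih, sum_range_succ, hg n, add_right_comm]

theorem Function.Periodic.tendsto_sum_range_div {g : ℕ → ℝ} {p : ℕ} (hg : Periodic g p)
    (hp : 0 < p) :
    Tendsto (fun n : ℕ => (∑ j ∈ range n, g j) / n) atTop
      (𝓝 ((∑ j ∈ range p, g j) / p)) := by
  set m := (∑ j ∈ range p, g j) / p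
  set e : ℕ → ℝ := fun n => ∑ j ∈ range n, g j - n * m
  have he : Periodic e p := fun n => by
    have : (p : ℝ) * m = ∑ j ∈ range p, g j := mul_div_cancel₀ _ (by positivity)
    simp only [e, hg.sum_range_add_period, Nat.cast_add]
    linarith
  have he_bdd : ∀ n, |e n| ≤ ∑ i ∈ range p, |e i| := fun n => by
    rw [← he.map_mod_nat n]
    exact single_le_sum (fun i _ => abs_nonneg (e i)) (mem_range.2 (Nat.mod_lt n hp))
  have he_div : Tendsto (fun n : ℕ => e n / n) atTop (𝓝 0) :=
    squeeze_zero_norm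
      (fun n => by rw [Real.norm_eq_abs, abs_div, Nat.abs_cast]; gcongr; exact he_bdd n)
      (tendsto_const_div_atTop_nhds_zero_nat _)
  have hlim : Tendsto (fun n : ℕ => m + e n / n) atTop (𝓝 m) := by
    simpa using he_div.const_add m
  refine hlim.congr' ?_
  filter_upwards [eventually_ne_atTop 0] with n hn
  simp only [e]
  field_simp
  ring

theorem tendsto_sum_range_div_of_tendsto_sub {u v : ℕ → ℝ} {L : ℝ}
    (huv : Tendsto (u - v) atTop (𝓝 0))
    (hv : Tendsto (fun n : ℕ => (∑ j ∈ range n, v j) / n) atTop (𝓝 L)) :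
    Tendsto (fun n : ℕ => (∑ j ∈ range n, u j) / n) atTop (𝓝 L) := by
  have hlim := huv.cesaro.add hv
  rw [zero_add] at hlim
  refine hlim.congr fun n => ?_
  simp only [Pi.sub_apply, sum_sub_distrib]
  ring

theorem tendsto_sum_range_div_of_tendsto_shift {u : ℕ → ℝ} {L : ℝ} (N : ℕ)
    (h : Tendsto (fun n : ℕ => (∑ j ∈ range n, u (j + N)) / n) atTop (𝓝 L)) :
    Tendsto (fun n : ℕ => (∑ j ∈ range n, u j) / n) atTop (𝓝 L) := by
  rw [← tendsto_add_atTop_iff_nat N]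
  have hC :
      Tendsto (fun n : ℕ => (∑ j ∈ range N, u j) / ((n + N : ℕ) : ℝ)) atTop (𝓝 0) :=
    (tendsto_const_div_atTop_nhds_zero_nat _).comp (tendsto_add_atTop_nat N)
  have hlim := hC.add ((tendsto_natCast_div_add_atTop (N : ℝ)).mul h)
  rw [zero_add, one_mul] at hlim
  refine hlim.congr' ?_
  filter_upwards [eventually_ne_atTop 0] with n hn
  rw [add_comm n N, sum_range_add]
  simp only [add_comm N]
  push_cast
  field_simp

theorem Set.Finite.exists_pos_forall_le_dist {M : Type*} [MetricSpace M] {S : Set M}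
    (hS : S.Finite) : ∃ γ > 0, ∀ y ∈ S, ∀ z ∈ S, y ≠ z → γ ≤ dist y z := by
  by_cases hS' : S.Nontrivial
  · exact ⟨S.infsep, hS.infsep_pos_iff_nontrivial.2 hS',
      fun y hy z hz => Set.infsep_le_dist_of_mem hy hz⟩
  · exact ⟨1, one_pos, fun y hy z hz hyz =>
      absurd (Set.not_nontrivial_iff.1 hS' hy hz) hyz⟩

theorem exists_mem_tendsto_dist_iterate_of_eventually_near {M : Type*} [MetricSpace M]
    {f : M → M} (hf : UniformContinuous f) {S : Set M} (hS : S.Finite) (hfS : Set.MapsTo f S S)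
    {x : M} (hnear : ∀ δ > 0, ∀ᶠ n in atTop, ∃ y ∈ S, dist (f^[n] x) y < δ) :
    ∃ N, ∃ w ∈ S, Tendsto (fun k => dist (f^[k + N] x) (f^[k] w)) atTop (𝓝 0) := by
  obtain ⟨γ, hγ, hsep⟩ := hS.exists_pos_forall_le_dist
  have huniq :
      ∀ y ∈ S, ∀ z ∈ S, ∀ a, dist a y < γ / 2 → dist a z < γ / 2 → y = z := by
    intro y hy z hz a hay haz
    by_contra hyz
    linarith [hsep y hy z hz hyz, dist_triangle_left y z a]
  obtain ⟨δ₀, hδ₀, hfδ⟩ := Metric.uniformContinuous_iff.1 hf (γ / 2) (half_pos hγ)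
  set δ := min δ₀ (γ / 2)
  have hδ : 0 < δ := lt_min hδ₀ (half_pos hγ)
  obtain ⟨N, hN⟩ := eventually_atTop.1 (hnear δ hδ)
  have : Nonempty M := ⟨x⟩
  choose! c hcS hc using hN
  -- both `c (n + 1)` and `f (c n)` lie within `γ / 2` of `f^[n + 1] x`
  have hstep : ∀ n ≥ N, c (n + 1) = f (c n) := fun n hn =>
    huniq _ (hcS _ (by omega)) _ (hfS (hcS n hn)) (f^[n + 1] x)
      ((hc _ (by omega)).trans_le (min_le_right _ _))
      (by rw [iterate_succ_apply']; exact hfδ ((hc n hn).trans_le (min_le_left _ _)))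
  have horbit : ∀ k, c (k + N) = f^[k] (c N) := by
    intro k
    induction k with
    | zero => simp
    | succ k ih => rw [Nat.add_right_comm, hstep _ (by omega), ih, iterate_succ_apply']
  refine ⟨N, c N, hcS N le_rfl, ?_⟩
  simp only [← horbit]
  refine (tendsto_add_atTop_iff_nat N).2 <| tendsto_order.2
    ⟨fun a ha => Eventually.of_forall fun n => ha.trans_le (dist_nonneg (x := f^[n] x)),
      fun η hη => ?_⟩
  filter_upwards [hnear (min η δ) (lt_min hη hδ), eventually_ge_atTop N]
    with n ⟨z, hz, hnz⟩ hn
  have hcz : c n = z := huniq _ (hcS n hn) _ hz _ ((hc n hn).trans_le (min_le_right _ _))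
    (hnz.trans_le ((min_le_right _ _).trans (min_le_right _ _)))
  exact hcz ▸ hnz.trans_le (min_le_left _ _)

theorem exists_pos_isPeriodicPt_iterate_of_mapsTo_finite {α : Type*} {f : α → α} {S : Set α}
    (hS : S.Finite) (hfS : Set.MapsTo f S S) {w : α} (hw : w ∈ S) :
    ∃ a p, 0 < p ∧ IsPeriodicPt f p (f^[a] w) := by
  obtain ⟨a, b, hab, heq⟩ := Set.Finite.exists_lt_map_eq_of_forall_mem
    (f := fun n => f^[n] w) (fun n => hfS.iterate n hw) hS
  refine ⟨a, b - a, Nat.sub_pos_of_lt hab, ?_⟩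
  rw [IsPeriodicPt, IsFixedPt, ← iterate_add_apply, Nat.sub_add_cancel hab.le]
  exact heq.symm

theorem mapsTo_omegaMap {M : Type*} [TopologicalSpace M] {f : M → M} (hf : Continuous f)
    (x : M) : Set.MapsTo f (omegaMap f x) (omegaMap f x) := by
  rintro y ⟨s, hs, hy⟩
  refine ⟨fun k => s k + 1, fun a b hab => Nat.succ_lt_succ (hs hab), ?_⟩
  simp only [iterate_succ_apply']
  exact (hf.tendsto y).comp hy

theorem eventually_exists_dist_lt_omegaMap {M : Type*} [MetricSpace M] [CompactSpace M]
    (f : M → M) (x : M) {δ : ℝ} (hδ : 0 < δ) :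
    ∀ᶠ n in atTop, ∃ y ∈ omegaMap f x, dist (f^[n] x) y < δ := by
  by_contra h
  obtain ⟨s, hs, hfar⟩ := extraction_of_frequently_atTop (not_eventually.1 h)
  obtain ⟨z, -, t, ht, hz⟩ :=
    isCompact_univ.tendsto_subseq (x := fun k => f^[s k] x) fun _ => Set.mem_univ _
  have hzω : z ∈ omegaMap f x := ⟨s ∘ t, hs.comp ht, hz⟩
  obtain ⟨k, hk⟩ := Metric.tendsto_atTop.1 hz δ hδ
  exact hfar (t k) ⟨z, hzω, hk k le_rfl⟩

theorem exists_isPeriodicPt_tendsto_dist_iterate_of_finite_omegaMap {M : Type*} [MetricSpace M]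
    [CompactSpace M] {f : M → M} (hf : Continuous f) {x : M} (hfin : (omegaMap f x).Finite) :
    ∃ N p y, 0 < p ∧ IsPeriodicPt f p y ∧
      Tendsto (fun k => dist (f^[k + N] x) (f^[k] y)) atTop (𝓝 0) := by
  obtain ⟨N, w, hw, hshadow⟩ := exists_mem_tendsto_dist_iterate_of_eventually_near
    (CompactSpace.uniformContinuous_of_continuous hf) hfin (mapsTo_omegaMap hf x)
    fun δ hδ => eventually_exists_dist_lt_omegaMap f x hδ
  obtain ⟨a, p, hp, hper⟩ :=
    exists_pos_isPeriodicPt_iterate_of_mapsTo_finite hfin (mapsTo_omegaMap hf x) hw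
  refine ⟨a + N, p, f^[a] w, hp, hper, ?_⟩
  simpa only [← add_assoc, ← iterate_add_apply] using (tendsto_add_atTop_iff_nat a).2 hshadow

theorem birkhoff_limit_of_finite_omega_general {M : Type*} [MetricSpace M] [CompactSpace M]
    (f : M → M) (hf : Continuous f)
    (φ : M → ℝ) (hφ : Continuous φ)
    (x : M) (hfin : (omegaMap f x).Finite) :
    ∃ L : ℝ, Tendsto (fun n : ℕ => birkSum f φ n x / n) atTop (nhds L) := by
  obtain ⟨N, p, y, hp, hy, hshadow⟩ :=
    exists_isPeriodicPt_tendsto_dist_iterate_of_finite_omegaMap hf hfin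
  have hφ_shadow : Tendsto (fun k => φ (f^[k + N] x) - φ (f^[k] y)) atTop (𝓝 0) := by
    have h : Tendsto (fun k => (f^[k + N] x, f^[k] y)) atTop (𝓤 M) :=
      tendsto_uniformity_iff_dist_tendsto_zero.2 hshadow
    replace h := Tendsto.comp (CompactSpace.uniformContinuous_of_continuous hφ) h
    rw [tendsto_zero_iff_norm_tendsto_zero]
    exact tendsto_uniformity_iff_dist_tendsto_zero.1 h
  have hperiodic : Periodic (fun k => φ (f^[k] y)) p := fun k => by
    simp only [iterate_add_apply, hy.eq]
  exact ⟨_, tendsto_sum_range_div_of_tendsto_shift (u := fun j => φ (f^[j] x)) N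
    (tendsto_sum_range_div_of_tendsto_sub hφ_shadow (hperiodic.tendsto_sum_range_div hp))⟩

/-- If `f`, `φ` and `φ₋` are continuous on a compact metric space and the ω-limit set
of `x` is finite, then the Birkhoff limit exists at `x`. -/
theorem birkhoff_limit_of_finite_omega {M : Type*} [MetricSpace M] [CompactSpace M]
    (f : M → M) (hf : Continuous f)
    (φ : M → ℝ) (hφ : Continuous φ)
    (hφm : Continuous (fun w => birkLower f φ w))
    (x : M) (hfin : (omegaMap f x).Finite) :
    ∃ L : ℝ, Tendsto (fun n : ℕ => birkSum f φ n x / n) atTop (nhds L) :=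
  birkhoff_limit_of_finite_omega_general f hf φ hφ x hfin
end

section
/- Let X be a continuous flow on a compact metric space M with time-t maps f_t, φ : M → ℝ continuous, and x ∈ M. If for all y ∈ ω(x) one has limsup_{n→∞} (1/n) ∫_0^n φ(f_t(y)) dt ≤ liminf_{n→∞} (1/n) ∫_0^n φ(f_t(x)) dt, then the limit lim_{T→∞} (1/T) ∫_0^T φ(f_t(x)) dt exists. -/
/-!
Let `L` be the liminf of the averages of `φ` along the orbit of `x` at integer times. At real
times the averages differ from these by `O(1/T)`, so they are eventually above `L - ε`.
For the upper bound fix `c > L`. Every `y ∈ ω(x)` admits a time `n ≥ 1` with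
`∫₀ⁿ φ(f_t y) dt < c n`, an open condition in `y`; by compactness of `ω(x)` a bounded set of
times `n ≤ N` serves a whole neighbourhood of `ω(x)`, in which the orbit of `x` eventually
stays. Cutting `[s₀, T]` greedily into such blocks, plus a last piece of length at most `N`,
gives `∫₀ᵀ φ(f_t x) dt ≤ c T + O(1)`.
-/

open Filter intervalIntegral

/-- ω-limit set of a point under a flow. -/
def omegaFlow {M : Type*} [TopologicalSpace M] (X : ℝ → M → M) (x : M) : Set M :=
  {y | ∃ s : ℕ → ℝ, Tendsto s atTop atTop ∧
    Tendsto (fun k => X (s k) x) atTop (nhds y)}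

open Topology omegaLimit

section Averages

variable {F : ℝ → ℝ} {C c c' D : ℝ}

theorem sub_le_mul_add_of_forall_exists_block {N s₀ : ℝ}
    (hF : ∀ a b, |F b - F a| ≤ C * |b - a|)
    (hblock : ∀ s ≥ s₀, ∃ τ, 1 ≤ τ ∧ τ ≤ N ∧ F (s + τ) - F s ≤ c * τ) :
    ∀ T ≥ s₀, F T - F s₀ ≤ c * (T - s₀) + |C - c| * N := by
  have remainder : ∀ s T, s ≤ T → T ≤ s + N → F T - F s ≤ c * (T - s) + |C - c| * N :=
    fun s T hsT hTN => calc
      F T - F s ≤ C * |T - s| := (le_abs_self _).trans (hF s T)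
      _ = c * (T - s) + (C - c) * (T - s) := by rw [abs_of_nonneg (sub_nonneg.2 hsT)]; ring
      _ ≤ c * (T - s) + |C - c| * N := by
        gcongr
        · exact le_abs_self _
        · linarith
  suffices key : ∀ k : ℕ, ∀ s T, s₀ ≤ s → s ≤ T → T ≤ s + k →
      F T - F s ≤ c * (T - s) + |C - c| * N from
    fun T hT => key ⌈T - s₀⌉₊ s₀ T le_rfl hT (by linarith [Nat.le_ceil (T - s₀)])
  intro k
  induction k with
  | zero =>
    intro s T hs hsT hTs
    obtain ⟨τ, hτ1, hτN, -⟩ := hblock s hs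
    exact remainder s T hsT (by push_cast at hTs; linarith)
  | succ k ih =>
    intro s T hs hsT hTs
    by_cases hT : T ≤ s + N
    · exact remainder s T hsT hT
    obtain ⟨τ, hτ1, hτN, hτ⟩ := hblock s hs
    have := ih (s + τ) T (by linarith) (by linarith) (by push_cast at hTs; linarith)
    linarith

theorem eventually_mul_sub_le_of_eventually_nat
    (hF : ∀ a b, |F b - F a| ≤ C * |b - a|)
    (hnat : ∀ᶠ n : ℕ in atTop, c * n ≤ F n) :
    ∀ᶠ T in atTop, c * T - |c + C| ≤ F T := by
  obtain ⟨n₀, hn₀⟩ := eventually_atTop.1 hnat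
  filter_upwards [eventually_ge_atTop (n₀ : ℝ)] with T hT
  have hnT : (⌊T⌋₊ : ℝ) ≤ T := Nat.floor_le ((Nat.cast_nonneg _).trans hT)
  have hTn : T - ⌊T⌋₊ ≤ 1 := by linarith [Nat.lt_floor_add_one T]
  have hfrac : (c + C) * (T - ⌊T⌋₊) ≤ |c + C| := calc
    (c + C) * (T - ⌊T⌋₊) ≤ |c + C| * 1 := by gcongr; exact le_abs_self _
    _ = |c + C| := mul_one _
  have hlip := (abs_le.1 (hF ⌊T⌋₊ T)).1
  rw [abs_of_nonneg (sub_nonneg.2 hnT)] at hlip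
  linarith [hn₀ ⌊T⌋₊ (Nat.le_floor hT)]

theorem eventually_div_lt_of_eventually_le_mul_add (hcc' : c < c')
    (hF : ∀ᶠ T in atTop, F T ≤ c * T + D) : ∀ᶠ T in atTop, F T / T < c' := by
  have hlim : Tendsto (fun T => c + D / T) atTop (𝓝 c) := by
    simpa using (tendsto_const_nhds (x := c)).add
      ((tendsto_const_nhds (x := D)).div_atTop tendsto_id)
  filter_upwards [hF, hlim.eventually (gt_mem_nhds hcc'), eventually_gt_atTop 0]
    with T hFT hT hT0
  calc F T / T ≤ (c * T + D) / T := by gcongr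
    _ = c + D / T := by field_simp
    _ < c' := hT

theorem eventually_lt_div_of_eventually_mul_sub_le (hc'c : c' < c)
    (hF : ∀ᶠ T in atTop, c * T - D ≤ F T) : ∀ᶠ T in atTop, c' < F T / T := by
  have := eventually_div_lt_of_eventually_le_mul_add (F := -F) (D := D) (neg_lt_neg hc'c)
    (hF.mono fun T hT => by simp only [Pi.neg_apply]; linarith)
  filter_upwards [this] with T hT
  simpa [neg_div] using hT

theorem exists_lt_mul_of_limsup_lt {G : ℕ → ℝ}
    (hbdd : IsBoundedUnder (· ≤ ·) atTop fun n : ℕ => 1 / (n : ℝ) * G n)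
    (h : limsup (fun n : ℕ => 1 / (n : ℝ) * G n) atTop < c) :
    ∃ n : ℕ, 1 ≤ n ∧ G n < c * n := by
  obtain ⟨n, hlt, hn⟩ := ((eventually_lt_of_limsup_lt h hbdd).and (eventually_ge_atTop 1)).exists
  rw [one_div_mul_eq_div, div_lt_iff₀ (by exact_mod_cast hn)] at hlt
  exact ⟨n, hn, hlt⟩

theorem eventually_mul_le_of_lt_liminf {G : ℕ → ℝ}
    (hbdd : IsBoundedUnder (· ≥ ·) atTop fun n : ℕ => 1 / (n : ℝ) * G n)
    (h : c < liminf (fun n : ℕ => 1 / (n : ℝ) * G n) atTop) :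
    ∀ᶠ n : ℕ in atTop, c * n ≤ G n := by
  filter_upwards [eventually_lt_of_lt_liminf h hbdd, eventually_gt_atTop 0] with n hn hn0
  rw [one_div_mul_eq_div, lt_div_iff₀ (by exact_mod_cast hn0)] at hn
  exact hn.le

theorem abs_one_div_mul_integral_le {g : ℝ → ℝ} (hC : ∀ t, |g t| ≤ C) (T : ℝ) :
    |1 / T * ∫ t in 0..T, g t| ≤ C := by
  rcases eq_or_ne T 0 with rfl | hT
  · simpa using (abs_nonneg _).trans (hC 0)
  have := norm_integral_le_of_norm_le_const (a := 0) (b := T) fun t _ =>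
    (Real.norm_eq_abs _).trans_le (hC t)
  rw [abs_mul, abs_one_div, div_mul_eq_mul_div, one_mul, div_le_iff₀ (abs_pos.2 hT)]
  simpa using this

theorem abs_integral_sub_integral_le {g : ℝ → ℝ} (hg : Continuous g)
    (hC : ∀ t, |g t| ≤ C) (a b : ℝ) :
    |(∫ t in 0..b, g t) - ∫ t in 0..a, g t| ≤ C * |b - a| := by
  rw [integral_interval_sub_left (hg.intervalIntegrable _ _) (hg.intervalIntegrable _ _)]
  exact norm_integral_le_of_norm_le_const fun t _ => (Real.norm_eq_abs _).trans_le (hC t)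

end Averages

section Flow

variable {M : Type*} {X : ℝ → M → M} {x : M}

theorem omegaLimit_subset_omegaFlow [TopologicalSpace M] [FirstCountableTopology M] :
    ω⁺ X {x} ⊆ omegaFlow X x := fun _ hy =>
  have ⟨s, hlim, hs⟩ :=
    ((mem_omegaLimit_singleton_iff_mapClusterPt _ _ _ _).1 hy).exists_seq_tendsto
  ⟨s, hs, hlim⟩

theorem integral_comp_flow_eq (hXadd : ∀ s t y, X (s + t) y = X s (X t y)) (φ : M → ℝ)
    (s τ : ℝ) : ∫ t in 0..τ, φ (X t (X s x)) = ∫ t in s..s + τ, φ (X t x) := by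
  simp_rw [← hXadd]
  rw [integral_comp_add_right (fun t => φ (X t x)), zero_add, add_comm]

theorem continuous_integral_comp_flow [TopologicalSpace M]
    (hX : Continuous fun p : ℝ × M => X p.1 p.2) {φ : M → ℝ} (hφ : Continuous φ) (a b : ℝ) :
    Continuous fun z => ∫ t in a..b, φ (X t z) :=
  continuous_parametric_intervalIntegral_of_continuous' (f := fun z t => φ (X t z))
    (hφ.comp (hX.comp continuous_swap)) a b

theorem exists_eventually_exists_integral_lt [TopologicalSpace M] [CompactSpace M]
    (hX : Continuous fun p : ℝ × M => X p.1 p.2) {φ : M → ℝ} (hφ : Continuous φ) {c : ℝ}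
    (hω : ∀ y ∈ ω⁺ X {x}, ∃ n : ℕ, 1 ≤ n ∧ ∫ t in 0..n, φ (X t y) < c * n) :
    ∃ N : ℕ, ∀ᶠ s in atTop,
      ∃ n : ℕ, 1 ≤ n ∧ n ≤ N ∧ ∫ t in 0..n, φ (X t (X s x)) < c * n := by
  let U : ℕ → Set M := fun N =>
    ⋃ n ∈ Finset.Icc 1 N, {z | ∫ t in 0..n, φ (X t z) < c * n}
  have hUopen : ∀ N, IsOpen (U N) := fun N => isOpen_biUnion fun n _ =>
    isOpen_lt (continuous_integral_comp_flow hX hφ 0 n) continuous_const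
  have hUmono : Monotone U := fun N N' h => Set.biUnion_subset_biUnion_left
    (Finset.coe_subset.2 (Finset.Icc_subset_Icc_right h))
  have hcover : ω⁺ X {x} ⊆ ⋃ N, U N := fun y hy => by
    obtain ⟨n, hn, hlt⟩ := hω y hy
    exact Set.mem_iUnion.2 ⟨n, Set.mem_biUnion (Finset.mem_Icc.2 ⟨hn, le_rfl⟩) hlt⟩
  obtain ⟨N, hN⟩ := (isClosed_omegaLimit _ _ _).isCompact.elim_directed_cover U hUopen hcover
    hUmono.directed_le
  refine ⟨N, (eventually_mapsTo_of_isOpen_of_omegaLimit_subset _ _ _ (hUopen N) hN).mono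
    fun s hs => ?_⟩
  obtain ⟨n, hn, hlt⟩ := Set.mem_iUnion₂.1 (hs rfl)
  exact ⟨n, (Finset.mem_Icc.1 hn).1, (Finset.mem_Icc.1 hn).2, hlt⟩

theorem exists_eventually_integral_le_mul_add [TopologicalSpace M] [CompactSpace M]
    (hX : Continuous fun p : ℝ × M => X p.1 p.2) (hXadd : ∀ s t y, X (s + t) y = X s (X t y))
    {φ : M → ℝ} (hφ : Continuous φ) {C c : ℝ} (hC : ∀ z, |φ z| ≤ C)
    (hω : ∀ y ∈ ω⁺ X {x}, ∃ n : ℕ, 1 ≤ n ∧ ∫ t in 0..n, φ (X t y) < c * n) :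
    ∃ D, ∀ᶠ T in atTop, ∫ t in 0..T, φ (X t x) ≤ c * T + D := by
  have horbit : Continuous fun t => φ (X t x) := hφ.comp (hX.comp (.prodMk_left x))
  obtain ⟨N, hN⟩ := exists_eventually_exists_integral_lt hX hφ hω
  obtain ⟨s₀, hs₀⟩ := eventually_atTop.1 hN
  have hblock : ∀ s ≥ s₀, ∃ τ : ℝ, 1 ≤ τ ∧ τ ≤ N ∧
      (∫ t in 0..s + τ, φ (X t x)) - ∫ t in 0..s, φ (X t x) ≤ c * τ := fun s hs => by
    obtain ⟨n, hn1, hnN, hlt⟩ := hs₀ s hs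
    refine ⟨n, by exact_mod_cast hn1, by exact_mod_cast hnN, ?_⟩
    rw [integral_interval_sub_left (horbit.intervalIntegrable _ _)
      (horbit.intervalIntegrable _ _), ← integral_comp_flow_eq hXadd]
    exact hlt.le
  refine ⟨(∫ t in 0..s₀, φ (X t x)) - c * s₀ + |C - c| * N,
    eventually_atTop.2 ⟨s₀, fun T hT => ?_⟩⟩
  have := sub_le_mul_add_of_forall_exists_block
    (abs_integral_sub_integral_le horbit fun t => hC _) hblock T hT
  linarith

end Flow

theorem flow_birkhoff_limit_general {M : Type*} [MetricSpace M] [CompactSpace M]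
    (X : ℝ → M → M) (hcont : Continuous fun p : ℝ × M => X p.1 p.2)
    (hXadd : ∀ s t y, X (s + t) y = X s (X t y))
    (φ : M → ℝ) (hφ : Continuous φ) (x : M)
    (h : ∀ y ∈ omegaFlow X x,
      limsup (fun n : ℕ => (1 / (n : ℝ)) * ∫ t in (0:ℝ)..(n : ℝ), φ (X t y)) atTop ≤
        liminf (fun n : ℕ => (1 / (n : ℝ)) * ∫ t in (0:ℝ)..(n : ℝ), φ (X t x)) atTop) :
    ∃ L : ℝ, Tendsto (fun T : ℝ => (1 / T) * ∫ t in (0:ℝ)..T, φ (X t x))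
      atTop (nhds L) := by
  obtain ⟨C, hC⟩ : ∃ C, ∀ z, |φ z| ≤ C := by
    simpa using (isCompact_range hφ).isBounded.exists_norm_le.imp fun C hC z => hC _ ⟨z, rfl⟩
  have horbit y : Continuous fun t => φ (X t y) := hφ.comp (hcont.comp (.prodMk_left y))
  have hbdd y : IsBoundedUnder (· ≤ ·) atTop
      fun n : ℕ => |1 / (n : ℝ) * ∫ t in 0..n, φ (X t y)| :=
    isBoundedUnder_of ⟨C, fun n => abs_one_div_mul_integral_le (fun t => hC _) n⟩
  refine ⟨liminf (fun n : ℕ => 1 / (n : ℝ) * ∫ t in 0..n, φ (X t x)) atTop,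
    tendsto_order.2 ⟨fun a ha => ?_, fun b hb => ?_⟩⟩ <;>
    simp_rw [one_div_mul_eq_div]
  · obtain ⟨c, hac, hcL⟩ := exists_between ha
    exact eventually_lt_div_of_eventually_mul_sub_le hac
      (eventually_mul_sub_le_of_eventually_nat
        (abs_integral_sub_integral_le (horbit x) fun t => hC _)
        (eventually_mul_le_of_lt_liminf (isBoundedUnder_le_abs.1 (hbdd x)).2 hcL))
  · obtain ⟨c, hLc, hcb⟩ := exists_between hb
    obtain ⟨D, hD⟩ := exists_eventually_integral_le_mul_add hcont hXadd hφ hC fun y hy =>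
      exists_lt_mul_of_limsup_lt (isBoundedUnder_le_abs.1 (hbdd y)).1
        ((h y (omegaLimit_subset_omegaFlow hy)).trans_lt hLc)
    exact eventually_div_lt_of_eventually_le_mul_add hcb hD

/-- Theorem B: criterion for the existence of the Birkhoff limit for a continuous
observable along a continuous flow on a compact metric space. -/
theorem flow_birkhoff_limit {M : Type*} [MetricSpace M] [CompactSpace M]
    (X : ℝ → M → M) (hcont : Continuous fun p : ℝ × M => X p.1 p.2)
    (hX0 : ∀ y, X 0 y = y) (hXadd : ∀ s t y, X (s + t) y = X s (X t y))
    (φ : M → ℝ) (hφ : Continuous φ) (x : M)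
    (h : ∀ y ∈ omegaFlow X x,
      limsup (fun n : ℕ => (1 / (n : ℝ)) * ∫ t in (0:ℝ)..(n : ℝ), φ (X t y)) atTop ≤
        liminf (fun n : ℕ => (1 / (n : ℝ)) * ∫ t in (0:ℝ)..(n : ℝ), φ (X t x)) atTop) :
    ∃ L : ℝ, Tendsto (fun T : ℝ => (1 / T) * ∫ t in (0:ℝ)..T, φ (X t x))
      atTop (nhds L) :=
  flow_birkhoff_limit_general X hcont hXadd φ hφ x h
end

section
/- Let X be a continuous flow on a compact metric space M with time-t maps f_t, and φ : M → ℝ continuous. Let x ∈ M be a 2d-point, i.e., for every y ∈ ω(x), ω(y) is a single fixed point of the flow. If φ takes the value min φ at every point of ω(x) ∩ Fix(X), then lim_{T→∞} (1/T) ∫_0^T φ(f_t(x)) dt exists. -/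
set_option linter.unusedSectionVars false
set_option linter.unusedVariables false

open Filter intervalIntegral

section Aux

variable {M : Type*} [MetricSpace M] [CompactSpace M] (X : ℝ → M → M)

/-- From a sequence of times tending to infinity landing in a closed set, get an
omega-limit point in that set. -/
lemma exists_omega_of_seq (x : M) (t : ℕ → ℝ) (ht : ∀ n : ℕ, (n : ℝ) ≤ t n)
    {C : Set M} (hC : IsClosed C) (hmem : ∀ n, X (t n) x ∈ C) :
    ∃ z ∈ C, z ∈ omegaFlow X x := by
  have hCc : IsCompact C := hC.isCompact
  obtain ⟨z, hzC, ψ, hψ, hconv⟩ := hCc.tendsto_subseq (x := fun n => X (t n) x) hmem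
  refine ⟨z, hzC, fun n => t (ψ n), ?_, hconv⟩
  apply tendsto_atTop_mono (fun n => (ht (ψ n)).trans' ?_)
    tendsto_natCast_atTop_atTop
  exact_mod_cast hψ.id_le n

lemma omegaFlow_nonempty (x : M) : (omegaFlow X x).Nonempty := by
  obtain ⟨z, -, hz⟩ := exists_omega_of_seq X x (fun n => (n : ℝ)) (fun n => le_refl _)
    isClosed_univ (fun n => Set.mem_univ _)
  exact ⟨z, hz⟩

lemma isClosed_omegaFlow (x : M) : IsClosed (omegaFlow X x) := by
  have : omegaFlow X x = ⋂ n : ℕ, closure ((fun t => X t x) '' Set.Ici (n : ℝ)) := by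
    ext y
    constructor
    · rintro ⟨s, hs, hconv⟩
      refine Set.mem_iInter.2 fun n => ?_
      apply mem_closure_of_tendsto hconv
      filter_upwards [hs.eventually_ge_atTop (n : ℝ)] with k hk
      exact Set.mem_image_of_mem _ hk
    · intro hy
      have h : ∀ n : ℕ, ∃ t : ℝ, (n : ℝ) ≤ t ∧ dist (X t x) y < 1 / (n + 1) := by
        intro n
        have := Set.mem_iInter.1 hy n
        rw [Metric.mem_closure_iff] at this
        obtain ⟨z, hz, hd⟩ := this (1 / (n + 1)) (by positivity)
        obtain ⟨t, ht, rfl⟩ := hz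
        exact ⟨t, ht, by rwa [dist_comm]⟩
      choose t ht hd using h
      refine ⟨t, tendsto_atTop_mono ht tendsto_natCast_atTop_atTop, ?_⟩
      rw [tendsto_iff_dist_tendsto_zero]
      apply squeeze_zero (fun n => dist_nonneg) (fun n => (hd n).le)
      exact tendsto_one_div_add_atTop_nhds_zero_nat
  rw [this]
  exact isClosed_iInter fun n => isClosed_closure

variable (hcont : Continuous fun p : ℝ × M => X p.1 p.2)
  (hXadd : ∀ s t y, X (s + t) y = X s (X t y))

include hcont in
lemma continuous_X_t (τ : ℝ) : Continuous fun z => X τ z :=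
  hcont.comp (continuous_const.prodMk continuous_id)

include hcont hXadd in
lemma omegaFlow_invariant {x y : M} (hy : y ∈ omegaFlow X x) (τ : ℝ) :
    X τ y ∈ omegaFlow X x := by
  obtain ⟨s, hs, hconv⟩ := hy
  refine ⟨fun k => τ + s k, tendsto_atTop_add_const_left _ _ hs, ?_⟩
  have : Tendsto (fun k => X τ (X (s k) x)) atTop (nhds (X τ y)) :=
    ((continuous_X_t X hcont τ).tendsto y).comp hconv
  simpa only [hXadd] using this

omit hcont in
lemma eventually_mem_of_omega_subset (x : M) {V : Set M} (hV : IsOpen V)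
    (hsub : omegaFlow X x ⊆ V) : ∀ᶠ t in atTop, X t x ∈ V := by
  by_contra h
  rw [not_eventually] at h
  have h' : ∀ n : ℕ, ∃ t : ℝ, (n : ℝ) ≤ t ∧ X t x ∉ V := by
    intro n
    rcases (frequently_atTop.1 h (n : ℝ)) with ⟨t, ht, ht'⟩
    exact ⟨t, ht, ht'⟩
  choose t ht hmem using h'
  obtain ⟨z, hzC, hz⟩ := exists_omega_of_seq X x t ht (hV.isClosed_compl) hmem
  exact hzC (hsub hz)

omit hcont in
lemma tendsto_orbit_of_omega_singleton {y q : M} (hy : omegaFlow X y = {q}) :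
    Tendsto (fun t : ℝ => X t y) atTop (nhds q) := by
  rw [Metric.tendsto_atTop]
  by_contra h
  push_neg at h
  obtain ⟨ε, hε, h⟩ := h
  have h' : ∀ n : ℕ, ∃ t : ℝ, (n : ℝ) ≤ t ∧ X t y ∈ {z | ε ≤ dist z q} := by
    intro n
    obtain ⟨t, ht, ht'⟩ := h (n : ℝ)
    exact ⟨t, ht, ht'⟩
  choose t ht hmem using h'
  have hC : IsClosed {z : M | ε ≤ dist z q} :=
    isClosed_le continuous_const (continuous_id.dist continuous_const)
  obtain ⟨z, hzC, hz⟩ := exists_omega_of_seq X y t ht hC hmem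
  rw [hy] at hz
  rw [hz] at hzC
  simp only [Set.mem_setOf_eq, dist_self] at hzC
  exact absurd hzC (not_le.2 hε)

end Aux


lemma exists_good_time {h : ℝ → ℝ} (hc : Continuous h) (hnn : ∀ t, 0 ≤ h t) {B : ℝ}
    (hB : ∀ t, h t ≤ B) (hlim : Tendsto h atTop (nhds 0)) {ε : ℝ} (hε : 0 < ε) :
    ∃ T : ℝ, 1 ≤ T ∧ ∫ t in (0:ℝ)..T, h t ≤ ε * T := by
  have hB0 : 0 ≤ B := le_trans (hnn 0) (hB 0)
  obtain ⟨T₀', hT₀'⟩ := (eventually_atTop.1 (hlim.eventually (ge_mem_nhds (half_pos hε))))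
  set T₀ := max T₀' 0 with hT₀def
  have hT₀0 : 0 ≤ T₀ := le_max_right _ _
  have hT₀ : ∀ t ≥ T₀, h t ≤ ε / 2 := fun t ht => hT₀' t (le_trans (le_max_left _ _) ht)
  set T := max (T₀ + 1) (2 * B * T₀ / ε) with hTdef
  have hTT₀ : T₀ ≤ T := le_trans (by linarith) (le_max_left _ _)
  have hT1 : 1 ≤ T := le_trans (by linarith) (le_max_left _ _)
  refine ⟨T, hT1, ?_⟩
  have hi : ∀ a b : ℝ, IntervalIntegrable h MeasureTheory.volume a b :=
    fun a b => hc.intervalIntegrable a b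
  have hsplit : ∫ t in (0:ℝ)..T, h t = (∫ t in (0:ℝ)..T₀, h t) + ∫ t in T₀..T, h t :=
    (integral_add_adjacent_intervals (hi 0 T₀) (hi T₀ T)).symm
  have e1 : ∫ t in (0:ℝ)..T₀, h t ≤ T₀ * B := by
    have := integral_mono_on hT₀0 (hi 0 T₀) (_root_.intervalIntegrable_const (c := B))
      (fun u _ => hB u)
    simpa [smul_eq_mul, mul_comm] using this
  have e2 : ∫ t in T₀..T, h t ≤ (T - T₀) * (ε / 2) := by
    have := integral_mono_on hTT₀ (hi T₀ T) (_root_.intervalIntegrable_const (c := ε / 2))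
      (fun u hu => hT₀ u hu.1)
    rw [integral_const, smul_eq_mul] at this
    linarith
  have e3 : B * T₀ ≤ ε / 2 * T := by
    have h1 : 2 * B * T₀ / ε ≤ T := le_max_right _ _
    rw [div_le_iff₀ hε] at h1
    nlinarith
  nlinarith [e1, e2, e3]

/-- If `x` is a `2d`-point and `φ` attains its minimum at every fixed point in `ω(x)`,
then the Birkhoff limit of `φ` along the orbit of `x` exists. -/
theorem flow_birkhoff_limit_2d_point {M : Type*} [MetricSpace M] [CompactSpace M]
    (X : ℝ → M → M) (hcont : Continuous fun p : ℝ × M => X p.1 p.2)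
    (hX0 : ∀ y, X 0 y = y) (hXadd : ∀ s t y, X (s + t) y = X s (X t y))
    (φ : M → ℝ) (hφ : Continuous φ) (x : M)
    (h2d : ∀ y ∈ omegaFlow X x, ∃ q : M, omegaFlow X y = {q} ∧ ∀ t : ℝ, X t q = q)
    (hmin : ∀ z ∈ omegaFlow X x, (∀ t : ℝ, X t z = z) → φ z = sInf (Set.range φ)) :
    ∃ L : ℝ, Tendsto (fun T : ℝ => (1 / T) * ∫ t in (0:ℝ)..T, φ (X t x))
      atTop (nhds L) := by
  classical
  set m := sInf (Set.range φ) with hm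
  have hrange : IsCompact (Set.range φ) := isCompact_range hφ
  have hmle : ∀ z, m ≤ φ z := fun z => csInf_le hrange.bddBelow (Set.mem_range_self z)
  set B := sSup (Set.range φ) - m with hBdef
  have hzB : ∀ z : M, φ z - m ≤ B :=
    fun z => sub_le_sub_right (le_csSup hrange.bddAbove ⟨z, rfl⟩) m
  set g : M → ℝ := fun z => φ z - m with hg
  have hgc : Continuous g := hφ.sub continuous_const
  have hg0 : ∀ z, 0 ≤ g z := fun z => sub_nonneg.2 (hmle z)
  have hgB : ∀ z, g z ≤ B := hzB
  have hB0 : 0 ≤ B := le_trans (hg0 x) (hgB x)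
  have horb' : ∀ z : M, Continuous fun t : ℝ => X t z :=
    fun z => hcont.comp (continuous_id.prodMk continuous_const)
  have hint : ∀ (z : M) (a b : ℝ),
      IntervalIntegrable (fun t => g (X t z)) MeasureTheory.volume a b :=
    fun z a b => (hgc.comp (horb' z)).intervalIntegrable a b
  set K := omegaFlow X x with hK
  have hKc : IsCompact K := (isClosed_omegaFlow X x).isCompact
  -- main estimate
  have main : ∀ ε : ℝ, 0 < ε → ∀ᶠ T in atTop,
      (1 / T) * ∫ t in (0:ℝ)..T, g (X t x) ≤ ε := by
    intro ε hε
    -- Step A/B: local averaging sets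
    have hA : ∀ y ∈ K, ∃ (T : ℝ) (V : Set M), 1 ≤ T ∧ IsOpen V ∧ y ∈ V ∧
        ∀ z ∈ V, ∫ t in (0:ℝ)..T, g (X t z) ≤ ε / 2 * T := by
      intro y hy
      obtain ⟨q, hq, hqfix⟩ := h2d y hy
      have hyq : Tendsto (fun t : ℝ => X t y) atTop (nhds q) :=
        tendsto_orbit_of_omega_singleton X hq
      have hqK : q ∈ K := by
        refine (isClosed_omegaFlow X x).mem_of_tendsto hyq ?_
        exact Eventually.of_forall fun t => omegaFlow_invariant X hcont hXadd hy t
      have hgq : g q = 0 := by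
        have h1 := hmin q hqK hqfix
        simp only [hg, h1, hm, sub_self]
      have hlim : Tendsto (fun t : ℝ => g (X t y)) atTop (nhds 0) := by
        have := (hgc.tendsto q).comp hyq
        rwa [hgq] at this
      obtain ⟨T, hT1, hTint⟩ := exists_good_time (hgc.comp (horb' y))
        (fun t => hg0 _) (fun t => hgB _) hlim (ε := ε / 4) (by positivity)
      have hcontInt : Continuous fun z : M => ∫ t in (0:ℝ)..T, g (X t z) := by
        apply continuous_parametric_intervalIntegral_of_continuous'
        exact hgc.comp (hcont.comp (continuous_snd.prodMk continuous_fst))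
      refine ⟨T, {z | ∫ t in (0:ℝ)..T, g (X t z) < ε / 2 * T}, hT1,
        isOpen_lt hcontInt continuous_const, ?_, fun z hz => le_of_lt hz⟩
      have : ε / 4 * T < ε / 2 * T := by nlinarith
      exact lt_of_le_of_lt hTint this
    choose! Ty Vy hTy1 hVopen hyV hVest using hA
    -- Step C: finite subcover
    obtain ⟨tf, htf⟩ := hKc.elim_finite_subcover (fun i : K => Vy i.1)
      (fun i => hVopen i.1 i.2) (fun z hz => Set.mem_iUnion.2 ⟨⟨z, hz⟩, hyV z hz⟩)
    obtain ⟨z₀, hz₀⟩ := omegaFlow_nonempty X x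
    have htfne : tf.Nonempty := by
      obtain ⟨i, hi, -⟩ := Set.mem_iUnion₂.1 (htf hz₀)
      exact ⟨i, hi⟩
    set W : Set M := ⋃ i ∈ tf, Vy (i : K).1 with hW
    have hWopen : IsOpen W := isOpen_biUnion fun i _ => hVopen i.1 i.2
    have hKW : K ⊆ W := htf
    set Tmax : ℝ := tf.sup' htfne (fun i => Ty i.1) with hTmax
    have hTmax1 : 1 ≤ Tmax := by
      obtain ⟨i, hi⟩ := htfne
      refine le_trans (hTy1 i.1 i.2) ?_
      rw [hTmax]
      exact Finset.le_sup' (fun j : K => Ty j.1) hi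
    have hWgood : ∀ z ∈ W, ∃ T', 1 ≤ T' ∧ T' ≤ Tmax ∧
        ∫ t in (0:ℝ)..T', g (X t z) ≤ ε / 2 * T' := by
      intro z hz
      obtain ⟨i, hi, hzi⟩ := Set.mem_iUnion₂.1 hz
      refine ⟨Ty i.1, hTy1 i.1 i.2, ?_, hVest i.1 i.2 z hzi⟩
      rw [hTmax]
      exact Finset.le_sup' (fun j : K => Ty j.1) hi
    -- Step D: orbit eventually in W
    obtain ⟨S₀, hS₀⟩ := eventually_atTop.1
      (eventually_mem_of_omega_subset X x hWopen hKW)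
    set S : ℝ := max S₀ 1 with hSdef
    have hS1 : 1 ≤ S := le_max_right _ _
    have hSmem : ∀ s : ℝ, S ≤ s → X s x ∈ W :=
      fun s hs => hS₀ s (le_trans (le_max_left _ _) hs)
    -- Step E: the recursion
    have hch : ∀ s : ℝ, S ≤ s → ∃ T', 1 ≤ T' ∧ T' ≤ Tmax ∧
        ∫ u in (0:ℝ)..T', g (X u (X s x)) ≤ ε / 2 * T' :=
      fun s hs => hWgood _ (hSmem s hs)
    let TT : ℝ → ℝ := fun s => if h : S ≤ s then (hch s h).choose else 1
    have hTT1 : ∀ s : ℝ, S ≤ s → 1 ≤ TT s := by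
      intro s hs; simp only [TT, dif_pos hs]; exact (hch s hs).choose_spec.1
    have hTTmax : ∀ s : ℝ, S ≤ s → TT s ≤ Tmax := by
      intro s hs; simp only [TT, dif_pos hs]; exact (hch s hs).choose_spec.2.1
    have hTTest : ∀ s : ℝ, S ≤ s →
        ∫ u in (0:ℝ)..(TT s), g (X u (X s x)) ≤ ε / 2 * TT s := by
      intro s hs; simp only [TT, dif_pos hs]; exact (hch s hs).choose_spec.2.2
    let σ : ℕ → ℝ := fun n => Nat.rec S (fun _ p => p + TT p) n
    have hσ0 : σ 0 = S := rfl
    have hσs : ∀ n, σ (n + 1) = σ n + TT (σ n) := fun n => rfl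
    have hσge : ∀ n, S ≤ σ n := by
      intro n; induction n with
      | zero => exact le_of_eq hσ0.symm
      | succ n ih => rw [hσs]; linarith [hTT1 (σ n) ih]
    have hσlb : ∀ n, S + n ≤ σ n := by
      intro n; induction n with
      | zero => simp [hσ0]
      | succ n ih =>
        rw [hσs]
        push_cast
        linarith [hTT1 (σ n) (hσge n)]
    have hσub : ∀ n, σ (n + 1) ≤ σ n + Tmax := by
      intro n; rw [hσs]; linarith [hTTmax (σ n) (hσge n)]
    -- block estimate
    have hblock : ∀ n, ∫ u in (σ n)..(σ (n + 1)), g (X u x)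
        ≤ ε / 2 * (σ (n + 1) - σ n) := by
      intro n
      have hs := hσge n
      have h1 : ∫ u in (0:ℝ)..(TT (σ n)), g (X u (X (σ n) x))
          = ∫ u in (0:ℝ)..(TT (σ n)), g (X (u + σ n) x) := by
        simp only [← hXadd]
      have h2 : ∫ u in (0:ℝ)..(TT (σ n)), g (X (u + σ n) x)
          = ∫ u in (σ n)..(TT (σ n) + σ n), g (X u x) := by
        have := integral_comp_add_right (a := (0:ℝ)) (b := TT (σ n))
          (fun u => g (X u x)) (σ n)
        simpa using this
      have h3 : σ (n + 1) = TT (σ n) + σ n := by rw [hσs]; ring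
      have := hTTest (σ n) hs
      rw [h1, h2] at this
      rw [h3]
      calc ∫ u in (σ n)..(TT (σ n) + σ n), g (X u x) ≤ ε / 2 * TT (σ n) := this
        _ = ε / 2 * (TT (σ n) + σ n - σ n) := by ring
    -- cumulative estimate
    have hcum : ∀ n, ∫ u in S..(σ n), g (X u x) ≤ ε / 2 * (σ n - S) := by
      intro n; induction n with
      | zero => simp [hσ0]
      | succ n ih =>
        have hadj := integral_add_adjacent_intervals (hint x S (σ n))
          (hint x (σ n) (σ (n + 1)))
        rw [← hadj]
        linarith [hblock n]
    -- Step F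
    filter_upwards [eventually_ge_atTop (max (S + 1) (2 * B * (S + Tmax) / ε)),
      eventually_gt_atTop (0 : ℝ)] with T hTge hT0
    have hTS : S + 1 ≤ T := le_trans (le_max_left _ _) hTge
    have hTB : 2 * B * (S + Tmax) / ε ≤ T := le_trans (le_max_right _ _) hTge
    rw [div_le_iff₀ hε] at hTB
    obtain ⟨k0, hk0⟩ := exists_nat_gt (T - S)
    have hcross : ∀ k : ℕ, T < σ k → ∃ n : ℕ, σ n ≤ T ∧ T < σ (n + 1) := by
      intro k
      induction k with
      | zero =>
        intro h
        rw [hσ0] at h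
        exact absurd h (not_lt.2 (by linarith))
      | succ k ih =>
        intro h
        rcases lt_or_ge T (σ k) with hc | hc
        · exact ih hc
        · exact ⟨k, hc, h⟩
    obtain ⟨n, hσnT, hTσ⟩ := hcross k0 (by linarith [hσlb k0])
    have hS0 : (0:ℝ) ≤ S := le_trans zero_le_one hS1
    have hsplit : ∫ u in (0:ℝ)..T, g (X u x)
        = (∫ u in (0:ℝ)..S, g (X u x)) + (∫ u in S..(σ n), g (X u x))
          + ∫ u in (σ n)..T, g (X u x) := by
      rw [integral_add_adjacent_intervals (hint x 0 S) (hint x S (σ n)),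
        integral_add_adjacent_intervals (hint x 0 (σ n)) (hint x (σ n) T)]
    have e1 : ∫ u in (0:ℝ)..S, g (X u x) ≤ B * S := by
      have := integral_mono_on hS0 (hint x 0 S) (_root_.intervalIntegrable_const (c := B))
        (fun u _ => hgB _)
      rw [integral_const, smul_eq_mul] at this
      linarith
    have e3 : ∫ u in (σ n)..T, g (X u x) ≤ B * Tmax := by
      have h1 := integral_mono_on hσnT (hint x (σ n) T)
        (_root_.intervalIntegrable_const (c := B)) (fun u _ => hgB _)
      rw [integral_const, smul_eq_mul] at h1
      have h2 : T - σ n ≤ Tmax := by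
        have := hσub n
        linarith
      nlinarith
    have e2 := hcum n
    have etot : ∫ u in (0:ℝ)..T, g (X u x) ≤ ε * T := by
      rw [hsplit]
      have h4 : ε / 2 * (σ n - S) ≤ ε / 2 * T := by
        have : σ n - S ≤ T := by linarith
        nlinarith
      nlinarith
    calc (1 / T) * ∫ u in (0:ℝ)..T, g (X u x) ≤ (1 / T) * (ε * T) := by
          apply mul_le_mul_of_nonneg_left etot
          positivity
      _ = ε := by field_simp
  -- conclude tendsto for g
  have key : Tendsto (fun T : ℝ => (1 / T) * ∫ t in (0:ℝ)..T, g (X t x))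
      atTop (nhds 0) := by
    rw [Metric.tendsto_atTop]
    intro ε hε
    have h1 := main (ε / 2) (half_pos hε)
    have h2 : ∀ᶠ T : ℝ in atTop, 0 ≤ (1 / T) * ∫ t in (0:ℝ)..T, g (X t x) := by
      filter_upwards [eventually_gt_atTop (0:ℝ)] with T hT
      have hnn : 0 ≤ ∫ t in (0:ℝ)..T, g (X t x) :=
        intervalIntegral.integral_nonneg hT.le (fun u _ => hg0 _)
      positivity
    obtain ⟨N, hN⟩ := eventually_atTop.1 (h1.and h2)
    refine ⟨N, fun T hT => ?_⟩
    obtain ⟨hle, hge⟩ := hN T hT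
    rw [Real.dist_eq, sub_zero, abs_of_nonneg hge]
    linarith
  -- conclude
  refine ⟨m, ?_⟩
  have heq : (fun T : ℝ => (1 / T) * (∫ t in (0:ℝ)..T, g (X t x)) + m)
      =ᶠ[atTop] fun T : ℝ => (1 / T) * ∫ t in (0:ℝ)..T, φ (X t x) := by
    filter_upwards [eventually_gt_atTop (0:ℝ)] with T hT
    have hiφ : IntervalIntegrable (fun t => φ (X t x)) MeasureTheory.volume 0 T :=
      (hφ.comp (horb' x)).intervalIntegrable 0 T
    have hφg : ∫ t in (0:ℝ)..T, φ (X t x)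
        = (∫ t in (0:ℝ)..T, g (X t x)) + T * m := by
      have : ∀ t : ℝ, g (X t x) = φ (X t x) - m := fun t => rfl
      rw [intervalIntegral.integral_congr (g := fun t => φ (X t x) - m)
        (fun t _ => this t)]
      rw [intervalIntegral.integral_sub hiφ (_root_.intervalIntegrable_const (c := m)),
        integral_const, smul_eq_mul]
      ring
    rw [hφg]
    field_simp
            
  refine Tendsto.congr' heq ?_
  have := key.add (tendsto_const_nhds (x := m) (f := atTop))
  simpa using this
end
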